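/- arXiv:2405.02952 — 4 statements merged into one kernel-verified Lean document; each statement's English description precedes it below -/
import Mathlib

section
/- Let f : ℝ^d → ℝ be differentiable at θ and let v be a random vector in ℝ^d whose scalar components v_i are independent with zero mean and unit variance. Then the forward gradient g_v(θ) = (∇f(θ)·v)v is an unbiased estimator of the gradient, i.e. E[g_v(θ)] = ∇f(θ). -/
/-!
Coordinatewise, `E[⟪g, v⟫ v_i] = ∑ₖ g_k E[v_k v_i]`, and independence with zero means and unit
variances makes the second moment matrix `E[v_k v_i]` the identity, so the mean is `g_i`.
-/

open MeasureTheory ProbabilityTheory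
open scoped RealInnerProductSpace

namespace EuclideanSpace

variable {ι : Type*} [Fintype ι]

lemma inner_smul_self_apply (g x : EuclideanSpace ℝ ι) (i : ι) :
    (⟪g, x⟫ • x) i = ∑ k, g k * (x k * x i) := by
  simp only [PiLp.smul_apply, smul_eq_mul, PiLp.inner_apply, RCLike.inner_apply, conj_trivial,
    Finset.sum_mul]
  exact Finset.sum_congr rfl fun k _ => by ring

end EuclideanSpace

section SecondMoments

variable {Ω ι : Type*} [MeasurableSpace Ω] {μ : Measure Ω} [DecidableEq ι]

theorem integral_inner_smul_self_of_integral_mul_eq_ite [Fintype ι] (v : Ω → EuclideanSpace ℝ ι)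
    (hint : ∀ i j, Integrable (fun ω => v ω i * v ω j) μ)
    (hmom : ∀ i j, ∫ ω, v ω i * v ω j ∂μ = if i = j then 1 else 0)
    (g : EuclideanSpace ℝ ι) :
    ∫ ω, ⟪g, v ω⟫ • v ω ∂μ = g := by
  have hint_coord : ∀ i, Integrable (fun ω => (⟪g, v ω⟫ • v ω) i) μ := fun i => by
    simp_rw [EuclideanSpace.inner_smul_self_apply]
    exact integrable_finsetSum _ fun k _ => (hint k i).const_mul _
  ext i
  rw [eval_integral_piLp hint_coord]
  simp_rw [EuclideanSpace.inner_smul_self_apply]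
  rw [integral_finsetSum _ fun k _ => (hint k i).const_mul _]
  simp [integral_const_mul, hmom]

theorem integral_mul_eq_ite_of_iIndepFun {X : ι → Ω → ℝ} (hindep : iIndepFun X μ)
    (hL2 : ∀ i, MemLp (X i) 2 μ) (hmean : ∀ i, ∫ ω, X i ω ∂μ = 0)
    (hvar : ∀ i, ∫ ω, X i ω ^ 2 ∂μ = 1) (i j : ι) :
    ∫ ω, X i ω * X j ω ∂μ = if i = j then 1 else 0 := by
  rcases eq_or_ne i j with rfl | hij
  · simpa [sq] using hvar i
  · rw [if_neg hij]
    simpa [hmean] using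
      (hindep.indepFun hij).integral_mul_eq_mul_integral (hL2 i).1 (hL2 j).1

end SecondMoments

theorem forward_gradient_unbiased_general
    {Ω : Type*} [MeasurableSpace Ω] {μ : Measure Ω}
    {d : ℕ} (f : EuclideanSpace ℝ (Fin d) → ℝ) (θ : EuclideanSpace ℝ (Fin d))
    (v : Ω → EuclideanSpace ℝ (Fin d))
    (hindep : iIndepFun (fun i ω => v ω i) μ)
    (hL2 : ∀ i, MemLp (fun ω => v ω i) 2 μ)
    (hmean : ∀ i, ∫ ω, v ω i ∂μ = 0)
    (hvar : ∀ i, ∫ ω, (v ω i) ^ 2 ∂μ = 1) :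
    ∫ ω, (⟪gradient f θ, v ω⟫ • v ω) ∂μ = gradient f θ :=
  integral_inner_smul_self_of_integral_mul_eq_ite v
    (fun i j => (hL2 i).integrable_mul (hL2 j))
    (integral_mul_eq_ite_of_iIndepFun hindep hL2 hmean hvar) _

/-- **Unbiasedness of the forward gradient.**
If the components of the random vector `v` are independent with zero mean and unit
variance, then the forward gradient `g_v(θ) = (∇f(θ)·v) v` is an unbiased estimator
of the gradient `∇f(θ)`. -/
theorem forward_gradient_unbiased
    {Ω : Type*} [MeasurableSpace Ω] {μ : Measure Ω} [IsProbabilityMeasure μ]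
    {d : ℕ} (f : EuclideanSpace ℝ (Fin d) → ℝ) (θ : EuclideanSpace ℝ (Fin d))
    (hf : DifferentiableAt ℝ f θ)
    (v : Ω → EuclideanSpace ℝ (Fin d)) (hmeas : Measurable v)
    (hindep : iIndepFun (fun i ω => v ω i) μ)
    (hL2 : ∀ i, MemLp (fun ω => v ω i) 2 μ)
    (hmean : ∀ i, ∫ ω, v ω i ∂μ = 0)
    (hvar : ∀ i, ∫ ω, (v ω i) ^ 2 ∂μ = 1) :
    ∫ ω, (⟪gradient f θ, v ω⟫ • v ω) ∂μ = gradient f θ :=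
  forward_gradient_unbiased_general f θ v hindep hL2 hmean hvar
end

section
/- Let f : ℝ^d → ℝ be differentiable at θ and let v be a random vector in ℝ^d whose components v_i are independent Rademacher variables, i.e. P(v_i = 1) = P(v_i = -1) = 1/2 for all i. Then the mean squared deviation of the forward gradient satisfies E[‖g_v(θ) − ∇f(θ)‖²] = (d − 1)‖∇f(θ)‖². -/
open MeasureTheory ProbabilityTheory
open scoped RealInnerProductSpace

/-!
For a Rademacher vector `v` every coordinate squares to `1`, so `‖v‖² = d` almost surely, and
independence together with `E[vᵢ] = 0` gives `E[vᵢ vⱼ] = δᵢⱼ`. Expanding the square,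
`‖⟪g, v⟫ v - g‖² = (‖v‖² - 2) ⟪g, v⟫² + ‖g‖²`, and `E[vᵢ vⱼ] = δᵢⱼ` gives `E[⟪g, v⟫²] = ‖g‖²`,
so the mean squared deviation is `(d - 2) ‖g‖² + ‖g‖² = (d - 1) ‖g‖²`.
-/

theorem norm_inner_smul_sub_sq {F : Type*} [NormedAddCommGroup F] [InnerProductSpace ℝ F]
    (g v : F) : ‖⟪g, v⟫ • v - g‖ ^ 2 = (‖v‖ ^ 2 - 2) * ⟪g, v⟫ ^ 2 + ‖g‖ ^ 2 := by
  rw [norm_sub_sq_real, norm_smul, real_inner_smul_left, real_inner_comm, Real.norm_eq_abs,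
    mul_pow, sq_abs]
  ring

namespace EuclideanSpace

variable {ι : Type*} [Fintype ι]

theorem inner_sq_eq_sum_sum (g x : EuclideanSpace ℝ ι) :
    ⟪g, x⟫ ^ 2 = ∑ i, ∑ j, g i * g j * (x i * x j) := by
  simp only [PiLp.inner_apply, RCLike.inner_apply, conj_trivial, sq, Finset.sum_mul_sum]
  exact Finset.sum_congr rfl fun i _ => Finset.sum_congr rfl fun j _ => by ring

theorem norm_sq_eq_card_of_sq_eq_one {x : EuclideanSpace ℝ ι} (hx : ∀ i, x i ^ 2 = 1) :
    ‖x‖ ^ 2 = Fintype.card ι := by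
  simp [real_norm_sq_eq, hx]

end EuclideanSpace

section SecondMoment

variable {ι Ω : Type*} [Fintype ι] [MeasurableSpace Ω] {μ : Measure Ω}
  {V : Ω → EuclideanSpace ℝ ι}

theorem integrable_inner_sq_of_memLp_two (hV : ∀ i, MemLp (fun ω => V ω i) 2 μ)
    (g : EuclideanSpace ℝ ι) : Integrable (fun ω => ⟪g, V ω⟫ ^ 2) μ := by
  simp only [EuclideanSpace.inner_sq_eq_sum_sum]
  exact integrable_finsetSum _ fun i _ => integrable_finsetSum _ fun j _ =>
    ((hV i).integrable_mul (hV j)).const_mul _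

theorem integral_inner_sq_of_isotropic [DecidableEq ι] (hV : ∀ i, MemLp (fun ω => V ω i) 2 μ)
    (hcov : ∀ i j, ∫ ω, V ω i * V ω j ∂μ = if i = j then 1 else 0) (g : EuclideanSpace ℝ ι) :
    ∫ ω, ⟪g, V ω⟫ ^ 2 ∂μ = ‖g‖ ^ 2 := by
  have hint : ∀ i j, Integrable (fun ω => V ω i * V ω j) μ := fun i j =>
    (hV i).integrable_mul (hV j)
  simp only [EuclideanSpace.inner_sq_eq_sum_sum]
  rw [integral_finsetSum _ fun i _ => integrable_finsetSum _ fun j _ => (hint i j).const_mul _]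
  simp_rw [integral_finsetSum _ fun j _ => (hint _ j).const_mul _, integral_const_mul, hcov,
    mul_ite, mul_one, mul_zero, Finset.sum_ite_eq, Finset.mem_univ, if_true,
    EuclideanSpace.real_norm_sq_eq, sq]

theorem integral_norm_inner_smul_sub_sq_of_isotropic [DecidableEq ι] [IsProbabilityMeasure μ]
    {c : ℝ} (hnorm : ∀ᵐ ω ∂μ, ‖V ω‖ ^ 2 = c) (hV : ∀ i, MemLp (fun ω => V ω i) 2 μ)
    (hcov : ∀ i j, ∫ ω, V ω i * V ω j ∂μ = if i = j then 1 else 0) (g : EuclideanSpace ℝ ι) :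
    ∫ ω, ‖⟪g, V ω⟫ • V ω - g‖ ^ 2 ∂μ = (c - 1) * ‖g‖ ^ 2 := by
  have hpt : (fun ω => ‖⟪g, V ω⟫ • V ω - g‖ ^ 2)
      =ᵐ[μ] fun ω => (c - 2) * ⟪g, V ω⟫ ^ 2 + ‖g‖ ^ 2 := by
    filter_upwards [hnorm] with ω hω
    rw [norm_inner_smul_sub_sq, hω]
  rw [integral_congr_ae hpt,
    integral_add ((integrable_inner_sq_of_memLp_two hV g).const_mul _) (integrable_const _),
    integral_const_mul, integral_inner_sq_of_isotropic hV hcov, integral_const, probReal_univ,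
    one_smul]
  ring

end SecondMoment

namespace ProbabilityTheory

def IsRademacher {Ω : Type*} [MeasurableSpace Ω] (X : Ω → ℝ) (μ : Measure Ω) : Prop :=
  μ {ω | X ω = 1} = 1 / 2 ∧ μ {ω | X ω = -1} = 1 / 2

namespace IsRademacher

variable {Ω : Type*} [MeasurableSpace Ω] {μ : Measure Ω} [IsProbabilityMeasure μ] {X : Ω → ℝ}

theorem ae_eq_one_or_eq_neg_one (hXm : Measurable X) (hX : IsRademacher X μ) :
    ∀ᵐ ω ∂μ, X ω = 1 ∨ X ω = -1 := by
  have hA : MeasurableSet {ω | X ω = 1} := hXm (measurableSet_singleton 1)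
  have hB : MeasurableSet {ω | X ω = -1} := hXm (measurableSet_singleton (-1))
  have hdisj : Disjoint {ω | X ω = 1} {ω | X ω = -1} :=
    Set.disjoint_left.2 fun ω (h1 : X ω = 1) h2 => by norm_num [h1] at h2
  have hunion : μ ({ω | X ω = 1} ∪ {ω | X ω = -1}) = 1 := by
    rw [measure_union hdisj hB, hX.1, hX.2, ENNReal.add_halves]
  exact mem_ae_iff.2 ((prob_compl_eq_zero_iff (hA.union hB)).2 hunion)

theorem ae_sq_eq_one (hXm : Measurable X) (hX : IsRademacher X μ) : ∀ᵐ ω ∂μ, X ω ^ 2 = 1 := by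
  filter_upwards [hX.ae_eq_one_or_eq_neg_one hXm] with ω hω
  rcases hω with h | h <;> simp [h]

theorem memLp (hXm : Measurable X) (hX : IsRademacher X μ) (p : ENNReal) : MemLp X p μ := by
  refine MemLp.of_bound hXm.aestronglyMeasurable 1 ?_
  filter_upwards [hX.ae_eq_one_or_eq_neg_one hXm] with ω hω
  rcases hω with h | h <;> simp [h]

theorem integral_eq_zero (hXm : Measurable X) (hX : IsRademacher X μ) : ∫ ω, X ω ∂μ = 0 := by
  have hA : MeasurableSet {ω | X ω = 1} := hXm (measurableSet_singleton 1)
  have hB : MeasurableSet {ω | X ω = -1} := hXm (measurableSet_singleton (-1))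
  have hsplit : X =ᵐ[μ] fun ω => {ω | X ω = 1}.indicator 1 ω - {ω | X ω = -1}.indicator 1 ω := by
    filter_upwards [hX.ae_eq_one_or_eq_neg_one hXm] with ω hω
    rcases hω with h | h <;> norm_num [Set.indicator_apply, h]
  rw [integral_congr_ae hsplit, integral_sub ((integrable_const 1).indicator hA)
    ((integrable_const 1).indicator hB), integral_indicator_one hA, integral_indicator_one hB,
    measureReal_def, measureReal_def, hX.1, hX.2, sub_self]

theorem integral_mul_eq_ite {ι : Type*} [DecidableEq ι] {X : ι → Ω → ℝ}
    (hXm : ∀ i, Measurable (X i)) (hindep : Pairwise fun i j => IndepFun (X i) (X j) μ)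
    (hX : ∀ i, IsRademacher (X i) μ) (i j : ι) :
    ∫ ω, X i ω * X j ω ∂μ = if i = j then 1 else 0 := by
  split_ifs with hij
  · subst hij
    simp_rw [← sq]
    rw [integral_congr_ae ((hX i).ae_sq_eq_one (hXm i)), integral_const, probReal_univ, one_smul]
  · have hmul := (hindep hij).integral_mul_eq_mul_integral
      (hXm i).aestronglyMeasurable (hXm j).aestronglyMeasurable
    rw [Pi.mul_def] at hmul
    rw [hmul, (hX i).integral_eq_zero (hXm i), zero_mul]

end IsRademacher

end ProbabilityTheory

theorem forward_gradient_mse_rademacher_general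
    {Ω : Type*} [MeasurableSpace Ω] {μ : Measure Ω} [IsProbabilityMeasure μ]
    {d : ℕ} (f : EuclideanSpace ℝ (Fin d) → ℝ) (θ : EuclideanSpace ℝ (Fin d))
    (v : Ω → EuclideanSpace ℝ (Fin d)) (hmeas : Measurable v)
    (hindep : iIndepFun (fun i ω => v ω i) μ)
    (hrad : ∀ i, μ {ω | v ω i = 1} = 1/2 ∧ μ {ω | v ω i = -1} = 1/2) :
    ∫ ω, ‖(⟪gradient f θ, v ω⟫ • v ω) - gradient f θ‖ ^ 2 ∂μ
      = ((d : ℝ) - 1) * ‖gradient f θ‖ ^ 2 := by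
  have hcoord : ∀ i, Measurable fun ω => v ω i := fun i =>
    (measurable_pi_apply i).comp ((WithLp.measurable_ofLp 2 _).comp hmeas)
  have hcoordRad : ∀ i, IsRademacher (fun ω => v ω i) μ := hrad
  have hnorm : ∀ᵐ ω ∂μ, ‖v ω‖ ^ 2 = d := by
    filter_upwards [ae_all_iff.2 fun i => (hcoordRad i).ae_sq_eq_one (hcoord i)] with ω hω
    simpa using EuclideanSpace.norm_sq_eq_card_of_sq_eq_one hω
  exact integral_norm_inner_smul_sub_sq_of_isotropic hnorm
    (fun i => (hcoordRad i).memLp (hcoord i) 2)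
    (IsRademacher.integral_mul_eq_ite hcoord (fun _ _ => hindep.indepFun) hcoordRad) _

/-- **Variance of the forward gradient for Rademacher directions.**
If the components of `v` are independent Rademacher variables, then the mean squared
deviation of the forward gradient `g_v(θ) = (∇f(θ)·v) v` from `∇f(θ)` equals
`(d - 1) ‖∇f(θ)‖²`. -/
theorem forward_gradient_mse_rademacher
    {Ω : Type*} [MeasurableSpace Ω] {μ : Measure Ω} [IsProbabilityMeasure μ]
    {d : ℕ} (f : EuclideanSpace ℝ (Fin d) → ℝ) (θ : EuclideanSpace ℝ (Fin d))
    (hf : DifferentiableAt ℝ f θ)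
    (v : Ω → EuclideanSpace ℝ (Fin d)) (hmeas : Measurable v)
    (hindep : iIndepFun (fun i ω => v ω i) μ)
    (hrad : ∀ i, μ {ω | v ω i = 1} = 1/2 ∧ μ {ω | v ω i = -1} = 1/2) :
    ∫ ω, ‖(⟪gradient f θ, v ω⟫ • v ω) - gradient f θ‖ ^ 2 ∂μ
      = ((d : ℝ) - 1) * ‖gradient f θ‖ ^ 2 :=
  forward_gradient_mse_rademacher_general f θ v hmeas hindep hrad
end

section
/- Let f, f̂ : ℝ^d → ℝ be differentiable at θ and let v be a random vector in ℝ^d whose scalar components v_i are independent with zero mean and unit variance. Then the mean squared deviation of the control variate forward gradient satisfies E[‖h_v(θ) − ∇f(θ)‖²] = Σ_{i=1}^d (∂f/∂θ_i(θ) − ∂f̂/∂θ_i(θ))² · Var[v_i²] + (d − 1)‖∇f(θ) − ∇f̂(θ)‖². In particular, among all such distributions this quantity is minimized exactly when Var[v_i²] = 0 for every i, which holds when the v_i are independent Rademacher variables. -/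
open MeasureTheory ProbabilityTheory
open scoped RealInnerProductSpace

/-!
With `a = ∇f(θ) - ∇f̂(θ)` the deviation is `h_v(θ) - ∇f(θ) = ⟪a, v⟫ v - a`, whose `i`-th
coordinate is `(∑ⱼ aⱼ vⱼ) vᵢ - aᵢ`. Expanding its square, independence and the moment conditions
kill every mixed moment: `E[vⱼ vᵢ] = δⱼᵢ` and `E[vⱼ vₖ vᵢ²] = δⱼₖ`, except `E[vᵢ⁴] = 1 + Var[vᵢ²]`.
Hence `E[((∑ⱼ aⱼ vⱼ) vᵢ - aᵢ)²] = aᵢ² Var[vᵢ²] + ‖a‖² - aᵢ²`, and summing over `i` gives the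
formula. The variance terms are nonnegative, and they vanish for Rademacher `vᵢ`, as then
`vᵢ² = 1` almost surely.
-/

open scoped ENNReal

instance ENNReal.HolderTriple.instFourFourTwo : ENNReal.HolderTriple 4 4 2 where
  inv_add_inv_eq_inv := by
    rw [show (4 : ℝ≥0∞) = 2 * 2 by norm_num, ENNReal.mul_inv (by simp) (by simp), ← mul_add,
      ENNReal.inv_two_add_inv_two, mul_one]

namespace MeasureTheory

variable {Ω : Type*} [MeasurableSpace Ω] {μ : Measure Ω}

lemma MemLp.integrable_mul_mul_sq {X Y Z : Ω → ℝ} (hX : MemLp X 4 μ) (hY : MemLp Y 4 μ)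
    (hZ : MemLp Z 4 μ) : Integrable (fun ω => X ω * Y ω * Z ω ^ 2) μ := by
  simpa only [sq, Pi.mul_def] using
    (hY.mul' hX : MemLp _ 2 μ).integrable_mul (hZ.mul' hZ : MemLp _ 2 μ)

lemma memLp_sum_mul {ι : Type*} [Fintype ι] {V : ι → Ω → ℝ} (hL4 : ∀ i, MemLp (V i) 4 μ)
    (a : ι → ℝ) (i : ι) : MemLp (fun ω => (∑ j, a j * V j ω) * V i ω) 2 μ :=
  (hL4 i).mul' (memLp_finsetSum _ fun j _ => (hL4 j).const_mul (a j))

end MeasureTheory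

namespace ProbabilityTheory

variable {Ω : Type*} [MeasurableSpace Ω] {μ : Measure Ω}

lemma variance_sq_eq_integral_pow_four_sub_one [IsProbabilityMeasure μ] {X : Ω → ℝ}
    (hX : MemLp X 4 μ) (hX2 : ∫ ω, X ω ^ 2 ∂μ = 1) :
    Var[fun ω => X ω ^ 2; μ] = ∫ ω, X ω ^ 4 ∂μ - 1 := by
  rw [variance_eq_sub (by simpa only [sq] using (hX.mul' hX : MemLp _ 2 μ)), hX2]
  simp only [Pi.pow_apply, ← pow_mul, one_pow]

variable {ι : Type*} {V : ι → Ω → ℝ}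

lemma iIndepFun.integral_mul_eq_ite [DecidableEq ι] (hindep : iIndepFun V μ)
    (hV : ∀ i, AEStronglyMeasurable (V i) μ) (hmean : ∀ i, ∫ ω, V i ω ∂μ = 0)
    (hvar : ∀ i, ∫ ω, V i ω ^ 2 ∂μ = 1) (j i : ι) :
    ∫ ω, V j ω * V i ω ∂μ = if j = i then 1 else 0 := by
  split_ifs with hji
  · subst hji
    simpa only [sq] using hvar j
  · simpa [hmean j] using (hindep.indepFun hji).integral_mul_eq_mul_integral (hV j) (hV i)

lemma iIndepFun.integral_mul_mul_sq_eq_ite [DecidableEq ι] (hindep : iIndepFun V μ)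
    (hV : ∀ i, AEStronglyMeasurable (V i) μ) (hmean : ∀ i, ∫ ω, V i ω ∂μ = 0)
    (hvar : ∀ i, ∫ ω, V i ω ^ 2 ∂μ = 1) (j k i : ι) :
    ∫ ω, V j ω * V k ω * V i ω ^ 2 ∂μ
      = if j = k then (if j = i then ∫ ω, V i ω ^ 4 ∂μ else 1) else 0 := by
  have hsq : ∀ l, AEStronglyMeasurable (fun ω => V l ω ^ 2) μ := fun l => (hV l).pow 2
  by_cases hjk : j = k
  · subst hjk
    by_cases hji : j = i
    · subst hji
      rw [if_pos rfl, if_pos rfl]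
      congr 1 with ω
      ring
    have hind : IndepFun (fun ω => V j ω ^ 2) (fun ω => V i ω ^ 2) μ :=
      (hindep.indepFun hji).comp (measurable_id.pow_const 2) (measurable_id.pow_const 2)
    calc ∫ ω, V j ω * V j ω * V i ω ^ 2 ∂μ
        = ∫ ω, ((fun ω => V j ω ^ 2) * fun ω => V i ω ^ 2) ω ∂μ := by simp only [Pi.mul_apply, sq]
      _ = _ := by rw [hind.integral_mul_eq_mul_integral (hsq j) (hsq i), hvar, hvar]; simp [hji]
  -- for `j ≠ k`, some factor of mean zero is independent of the product of the others
  rw [if_neg hjk]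
  by_cases hji : j = i
  · subst hji
    have hind : IndepFun (V k) (fun ω => V j ω ^ 3) μ :=
      (hindep.indepFun (Ne.symm hjk)).comp measurable_id (measurable_id.pow_const 3)
    calc ∫ ω, V j ω * V k ω * V j ω ^ 2 ∂μ
        = ∫ ω, (V k * fun ω => V j ω ^ 3) ω ∂μ := by congr 1; ext ω; simp only [Pi.mul_apply]; ring
      _ = 0 := by
        rw [hind.integral_mul_eq_mul_integral (hV k) ((hV j).pow 3), hmean, zero_mul]
  have hind : IndepFun (V j) (fun ω => V k ω * V i ω ^ 2) μ :=
    ((hindep.indepFun_prodMk₀ (fun l => (hV l).aemeasurable) k i j (Ne.symm hjk)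
      (Ne.symm hji)).comp (measurable_fst.mul (measurable_snd.pow_const 2)) measurable_id).symm
  calc ∫ ω, V j ω * V k ω * V i ω ^ 2 ∂μ
      = ∫ ω, (V j * fun ω => V k ω * V i ω ^ 2) ω ∂μ := by
        congr 1; ext ω; simp only [Pi.mul_apply]; ring
    _ = 0 := by
      rw [hind.integral_mul_eq_mul_integral (hV j) ((hV k).mul (hsq i)), hmean, zero_mul]

variable [Fintype ι]

lemma iIndepFun.integral_sum_mul_mul [DecidableEq ι] (hindep : iIndepFun V μ)
    (hL2 : ∀ i, MemLp (V i) 2 μ) (hmean : ∀ i, ∫ ω, V i ω ∂μ = 0)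
    (hvar : ∀ i, ∫ ω, V i ω ^ 2 ∂μ = 1) (a : ι → ℝ) (i : ι) :
    ∫ ω, (∑ j, a j * V j ω) * V i ω ∂μ = a i := by
  have hint : ∀ j, Integrable (fun ω => a j * (V j ω * V i ω)) μ :=
    fun j => ((hL2 j).integrable_mul (hL2 i)).const_mul (a j)
  simp_rw [Finset.sum_mul, mul_assoc]
  rw [integral_finsetSum _ fun j _ => hint j]
  simp_rw [integral_const_mul, hindep.integral_mul_eq_ite (fun l => (hL2 l).1) hmean hvar]
  simp

lemma iIndepFun.integral_sum_sq_mul_sq [IsProbabilityMeasure μ] [DecidableEq ι]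
    (hindep : iIndepFun V μ) (hL4 : ∀ i, MemLp (V i) 4 μ) (hmean : ∀ i, ∫ ω, V i ω ∂μ = 0)
    (hvar : ∀ i, ∫ ω, V i ω ^ 2 ∂μ = 1) (a : ι → ℝ) (i : ι) :
    ∫ ω, (∑ j, a j * V j ω) ^ 2 * V i ω ^ 2 ∂μ
      = ∑ j, a j ^ 2 + a i ^ 2 * Var[fun ω => V i ω ^ 2; μ] := by
  have hexpand : ∀ ω, (∑ j, a j * V j ω) ^ 2 * V i ω ^ 2
      = ∑ j, ∑ k, a j * a k * (V j ω * V k ω * V i ω ^ 2) := fun ω => by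
    rw [sq, Finset.sum_mul_sum, Finset.sum_mul]
    exact Finset.sum_congr rfl fun j _ => by
      rw [Finset.sum_mul]; exact Finset.sum_congr rfl fun k _ => by ring
  have hint : ∀ j k, Integrable (fun ω => a j * a k * (V j ω * V k ω * V i ω ^ 2)) μ :=
    fun j k => ((hL4 j).integrable_mul_mul_sq (hL4 k) (hL4 i)).const_mul _
  simp_rw [hexpand]
  rw [integral_finsetSum _ fun j _ => integrable_finsetSum _ fun k _ => hint j k]
  simp_rw [integral_finsetSum _ fun k _ => hint _ k, integral_const_mul,
    hindep.integral_mul_mul_sq_eq_ite (fun l => (hL4 l).1) hmean hvar]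
  have hdiag : ∀ j, (if j = i then a j * a j * ∫ ω, V i ω ^ 4 ∂μ else a j * a j * 1)
      = a j ^ 2 + if j = i then a i ^ 2 * (∫ ω, V i ω ^ 4 ∂μ - 1) else 0 := fun j => by
    split_ifs with hji
    · subst hji; ring
    · ring
  simp only [mul_ite, mul_zero, Finset.sum_ite_eq, Finset.mem_univ, if_true]
  rw [Finset.sum_congr rfl fun j _ => hdiag j, Finset.sum_add_distrib, Finset.sum_ite_eq',
    if_pos (Finset.mem_univ i), variance_sq_eq_integral_pow_four_sub_one (hL4 i) (hvar i)]

lemma iIndepFun.integral_sum_mul_mul_sub_sq [IsProbabilityMeasure μ] (hindep : iIndepFun V μ)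
    (hL4 : ∀ i, MemLp (V i) 4 μ) (hmean : ∀ i, ∫ ω, V i ω ∂μ = 0)
    (hvar : ∀ i, ∫ ω, V i ω ^ 2 ∂μ = 1) (a : ι → ℝ) (i : ι) :
    ∫ ω, ((∑ j, a j * V j ω) * V i ω - a i) ^ 2 ∂μ
      = a i ^ 2 * Var[fun ω => V i ω ^ 2; μ] + (∑ j, a j ^ 2 - a i ^ 2) := by
  classical
  have hS := memLp_sum_mul hL4 a i
  have hexpand : ∀ ω, ((∑ j, a j * V j ω) * V i ω - a i) ^ 2
      = ((∑ j, a j * V j ω) * V i ω) ^ 2 - 2 * a i * ((∑ j, a j * V j ω) * V i ω) + a i ^ 2 :=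
    fun ω => by ring
  simp_rw [hexpand]
  have hlin : Integrable (fun ω => 2 * a i * ((∑ j, a j * V j ω) * V i ω)) μ :=
    (hS.integrable one_le_two).const_mul _
  rw [integral_add (by exact hS.integrable_sq.sub hlin) (integrable_const _),
    integral_sub hS.integrable_sq hlin, integral_const_mul]
  simp_rw [mul_pow]
  rw [hindep.integral_sum_sq_mul_sq hL4 hmean hvar,
    hindep.integral_sum_mul_mul (fun l => (hL4 l).mono_exponent (by norm_num)) hmean hvar]
  simp only [integral_const, probReal_univ, smul_eq_mul, one_mul]
  ring

theorem iIndepFun.integral_norm_inner_smul_sub_sq [IsProbabilityMeasure μ]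
    {v : Ω → EuclideanSpace ℝ ι} (hindep : iIndepFun (fun i ω => v ω i) μ)
    (hL4 : ∀ i, MemLp (fun ω => v ω i) 4 μ) (hmean : ∀ i, ∫ ω, v ω i ∂μ = 0)
    (hvar : ∀ i, ∫ ω, v ω i ^ 2 ∂μ = 1) (a : EuclideanSpace ℝ ι) :
    ∫ ω, ‖⟪a, v ω⟫ • v ω - a‖ ^ 2 ∂μ
      = ∑ i, a i ^ 2 * Var[fun ω => v ω i ^ 2; μ] + (Fintype.card ι - 1) * ‖a‖ ^ 2 := by
  have hcoord : ∀ ω, ‖⟪a, v ω⟫ • v ω - a‖ ^ 2 = ∑ i, ((∑ j, a j * v ω j) * v ω i - a i) ^ 2 :=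
    fun ω => by simp [EuclideanSpace.norm_sq_eq, PiLp.inner_apply, mul_comm]
  simp_rw [hcoord]
  rw [integral_finsetSum _ fun i _ => by
    exact ((memLp_sum_mul hL4 a i).sub (memLp_const _)).integrable_sq]
  simp_rw [hindep.integral_sum_mul_mul_sub_sq hL4 hmean hvar]
  simp only [Finset.sum_add_distrib, Finset.sum_sub_distrib, Finset.sum_const, Finset.card_univ,
    nsmul_eq_mul, EuclideanSpace.norm_sq_eq, Real.norm_eq_abs, sq_abs]
  ring

lemma variance_sq_eq_zero_of_measure_eq_half [IsProbabilityMeasure μ] {X : Ω → ℝ}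
    (hX : AEMeasurable X μ) (h1 : μ {ω | X ω = 1} = 1 / 2) (hm1 : μ {ω | X ω = -1} = 1 / 2) :
    Var[fun ω => X ω ^ 2; μ] = 0 := by
  have hnull : ∀ c : ℝ, NullMeasurableSet {ω | X ω = c} μ :=
    fun c => hX.nullMeasurable (measurableSet_singleton c)
  have hpm : {ω | X ω = 1} ∪ {ω | X ω = -1} ∈ ae μ := by
    rw [mem_ae_iff, prob_compl_eq_zero_iff₀ ((hnull 1).union (hnull (-1))),
      measure_union₀ (hnull (-1)) (Disjoint.aedisjoint ?_), h1, hm1, ENNReal.add_halves]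
    exact Set.disjoint_left.2 fun ω (h : X ω = 1) (h' : X ω = -1) => by norm_num [h] at h'
  have hsq : (fun ω => X ω ^ 2) =ᵐ[μ] fun _ => 1 := by
    filter_upwards [hpm] with ω h
    rcases h with h | h <;> simp only [Set.mem_ofPred_eq] at h <;> simp [h]
  rw [variance_congr hsq, variance_eq_sub (memLp_const 1)]
  simp

end ProbabilityTheory

theorem cv_forward_gradient_mse_general_general
    {Ω : Type*} [MeasurableSpace Ω] {μ : Measure Ω} [IsProbabilityMeasure μ]
    {d : ℕ} (f fhat : EuclideanSpace ℝ (Fin d) → ℝ) (θ : EuclideanSpace ℝ (Fin d))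
    (v : Ω → EuclideanSpace ℝ (Fin d))
    (hindep : iIndepFun (fun i ω => v ω i) μ)
    (hL4 : ∀ i, MemLp (fun ω => v ω i) 4 μ)
    (hmean : ∀ i, ∫ ω, v ω i ∂μ = 0)
    (hvar : ∀ i, ∫ ω, (v ω i) ^ 2 ∂μ = 1) :
    (∫ ω, ‖(⟪gradient f θ, v ω⟫ • v ω - ⟪gradient fhat θ, v ω⟫ • v ω + gradient fhat θ)
          - gradient f θ‖ ^ 2 ∂μ
        = (∑ i, (gradient f θ i - gradient fhat θ i) ^ 2 * variance (fun ω => (v ω i) ^ 2) μ)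
          + ((d : ℝ) - 1) * ‖gradient f θ - gradient fhat θ‖ ^ 2)
    ∧ (((d : ℝ) - 1) * ‖gradient f θ - gradient fhat θ‖ ^ 2
        ≤ ∫ ω, ‖(⟪gradient f θ, v ω⟫ • v ω - ⟪gradient fhat θ, v ω⟫ • v ω + gradient fhat θ)
              - gradient f θ‖ ^ 2 ∂μ)
    ∧ ((∀ i, μ {ω | v ω i = 1} = 1/2 ∧ μ {ω | v ω i = -1} = 1/2) →
        (∀ i, variance (fun ω => (v ω i) ^ 2) μ = 0) ∧
        ∫ ω, ‖(⟪gradient f θ, v ω⟫ • v ω - ⟪gradient fhat θ, v ω⟫ • v ω + gradient fhat θ)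
              - gradient f θ‖ ^ 2 ∂μ
          = ((d : ℝ) - 1) * ‖gradient f θ - gradient fhat θ‖ ^ 2) := by
  set g := gradient f θ
  set ĝ := gradient fhat θ
  have hmse : ∫ ω, ‖(⟪g, v ω⟫ • v ω - ⟪ĝ, v ω⟫ • v ω + ĝ) - g‖ ^ 2 ∂μ
      = (∑ i, (g i - ĝ i) ^ 2 * Var[fun ω => v ω i ^ 2; μ]) + ((d : ℝ) - 1) * ‖g - ĝ‖ ^ 2 := by
    have hcv : ∀ ω, (⟪g, v ω⟫ • v ω - ⟪ĝ, v ω⟫ • v ω + ĝ) - g = ⟪g - ĝ, v ω⟫ • v ω - (g - ĝ) :=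
      fun ω => by rw [inner_sub_left, sub_smul]; abel
    simp_rw [hcv, hindep.integral_norm_inner_smul_sub_sq hL4 hmean hvar, Fintype.card_fin,
      PiLp.sub_apply]
  have hvar_nonneg : 0 ≤ ∑ i, (g i - ĝ i) ^ 2 * Var[fun ω => v ω i ^ 2; μ] :=
    Finset.sum_nonneg fun i _ => mul_nonneg (sq_nonneg _) (variance_nonneg _ μ)
  refine ⟨hmse, by linarith, fun hrad => ?_⟩
  have hzero : ∀ i, Var[fun ω => v ω i ^ 2; μ] = 0 := fun i =>
    variance_sq_eq_zero_of_measure_eq_half (hL4 i).aemeasurable (hrad i).1 (hrad i).2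
  exact ⟨hzero, by simp [hmse, hzero]⟩

/-- **General variance formula for the control variate forward gradient and its
minimization.**  If the components of `v` are independent with zero mean and unit
variance, then
`E[‖h_v(θ) − ∇f(θ)‖²] = Σ_i (∂_i f(θ) − ∂_i f̂(θ))² Var[v_i²] + (d−1)‖∇f(θ) − ∇f̂(θ)‖²`.
In particular this quantity is always at least `(d−1)‖∇f(θ) − ∇f̂(θ)‖²` (it is minimized
exactly when `Var[v_i²] = 0` for every `i`), and the minimum is attained when the `v_i`
are independent Rademacher variables. -/
theorem cv_forward_gradient_mse_general
    {Ω : Type*} [MeasurableSpace Ω] {μ : Measure Ω} [IsProbabilityMeasure μ]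
    {d : ℕ} (f fhat : EuclideanSpace ℝ (Fin d) → ℝ) (θ : EuclideanSpace ℝ (Fin d))
    (hf : DifferentiableAt ℝ f θ) (hfhat : DifferentiableAt ℝ fhat θ)
    (v : Ω → EuclideanSpace ℝ (Fin d)) (hmeas : Measurable v)
    (hindep : iIndepFun (fun i ω => v ω i) μ)
    (hL4 : ∀ i, MemLp (fun ω => v ω i) 4 μ)
    (hmean : ∀ i, ∫ ω, v ω i ∂μ = 0)
    (hvar : ∀ i, ∫ ω, (v ω i) ^ 2 ∂μ = 1) :
    (∫ ω, ‖(⟪gradient f θ, v ω⟫ • v ω - ⟪gradient fhat θ, v ω⟫ • v ω + gradient fhat θ)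
          - gradient f θ‖ ^ 2 ∂μ
        = (∑ i, (gradient f θ i - gradient fhat θ i) ^ 2 * variance (fun ω => (v ω i) ^ 2) μ)
          + ((d : ℝ) - 1) * ‖gradient f θ - gradient fhat θ‖ ^ 2)
    ∧ (((d : ℝ) - 1) * ‖gradient f θ - gradient fhat θ‖ ^ 2
        ≤ ∫ ω, ‖(⟪gradient f θ, v ω⟫ • v ω - ⟪gradient fhat θ, v ω⟫ • v ω + gradient fhat θ)
              - gradient f θ‖ ^ 2 ∂μ)
    ∧ ((∀ i, μ {ω | v ω i = 1} = 1/2 ∧ μ {ω | v ω i = -1} = 1/2) →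
        (∀ i, variance (fun ω => (v ω i) ^ 2) μ = 0) ∧
        ∫ ω, ‖(⟪gradient f θ, v ω⟫ • v ω - ⟪gradient fhat θ, v ω⟫ • v ω + gradient fhat θ)
              - gradient f θ‖ ^ 2 ∂μ
          = ((d : ℝ) - 1) * ‖gradient f θ - gradient fhat θ‖ ^ 2) :=
  cv_forward_gradient_mse_general_general f fhat θ v hindep hL4 hmean hvar
end

section
/- Let f : ℝ^d → ℝ be L-smooth, let f̂ : ℝ^d → ℝ be differentiable, let ε > 0, let θ ∈ ℝ^d, and let v be a random vector in ℝ^d with independent Rademacher components. Then the mean squared error of the finite-difference control variate forward gradient h_{v,ε}(θ) = ((f(θ+εv) − f(θ))/ε) v − (∇f̂(θ)·v)v + ∇f̂(θ) satisfies E[‖h_{v,ε}(θ) − ∇f(θ)‖²] ≤ ε² L² d³ / 4 + 2 (d − 1) (ε L d^{3/2} / 2) ‖∇f(θ) − ∇f̂(θ)‖ + (d − 1) ‖∇f(θ) − ∇f̂(θ)‖². -/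
/-!
With `D = ∇f(θ) - ∇f̂(θ)` and `a = (f(θ + εv) - f(θ))/ε - ⟪∇f(θ), v⟫` the finite-difference
error, `h_{v,ε}(θ) - ∇f(θ) = a v + (⟪D, v⟫ v - D)`. As `‖v‖² = d`, its squared norm is
`d a² + 2(d - 1) a ⟪D, v⟫ + (d - 2) ⟪D, v⟫² + ‖D‖²`. Smoothness gives `|a| ≤ εLd/2`,
Cauchy–Schwarz gives `|⟪D, v⟫| ≤ √d ‖D‖`, and the coordinates of `v`, being independent,
centred and of unit square, are orthonormal in `L²`, so `E ⟪D, v⟫² = ‖D‖²`; taking this last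
term in expectation rather than bounding it produces the factor `d - 1`.
-/

open MeasureTheory ProbabilityTheory
open scoped RealInnerProductSpace

section InnerProductSpace

variable {E : Type*} [NormedAddCommGroup E] [InnerProductSpace ℝ E]

theorem norm_smul_add_inner_smul_sub_sq (a : ℝ) (u w : E) :
    ‖a • u + (⟪w, u⟫ • u - w)‖ ^ 2
      = ‖u‖ ^ 2 * a ^ 2 + 2 * (‖u‖ ^ 2 - 1) * (a * ⟪w, u⟫) + (‖u‖ ^ 2 - 2) * ⟪w, u⟫ ^ 2
        + ‖w‖ ^ 2 := by
  simp only [norm_add_sq_real, norm_sub_sq_real, norm_smul, inner_sub_right, real_inner_smul_left,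
    real_inner_smul_right, real_inner_self_eq_norm_sq, real_inner_comm u w, mul_pow,
    Real.norm_eq_abs, sq_abs]
  ring

variable [CompleteSpace E] {f : E → ℝ} {L : ℝ}

theorem abs_sub_sub_inner_gradient_le (hf : Differentiable ℝ f)
    (hlip : ∀ x y, ‖gradient f x - gradient f y‖ ≤ L * ‖x - y‖) (x u : E) :
    |f (x + u) - f x - ⟪gradient f x, u⟫| ≤ L / 2 * ‖u‖ ^ 2 := by
  set g : ℝ → ℝ := fun t => f (x + t • u) - f x - t * ⟪gradient f x, u⟫
  have hg : ∀ t, HasDerivAt g (⟪gradient f (x + t • u) - gradient f x, u⟫) t := by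
    intro t
    have hline : HasDerivAt (fun s : ℝ => x + s • u) u t := by
      simpa using ((hasDerivAt_id t).smul_const u).const_add x
    have hfline := (hf (x + t • u)).hasGradientAt.hasFDerivAt.comp_hasDerivAt t hline
    rw [InnerProductSpace.toDual_apply_apply] at hfline
    have := (hfline.sub_const (f x)).sub (hasDerivAt_mul_const ⟪gradient f x, u⟫)
    rwa [← inner_sub_left] at this
  have hB : ∀ t, HasDerivAt (fun t => L / 2 * ‖u‖ ^ 2 * t ^ 2) (L * ‖u‖ ^ 2 * t) t := fun t => by
    refine ((hasDerivAt_pow 2 t).const_mul (L / 2 * ‖u‖ ^ 2)).congr_deriv ?_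
    ring
  have hbound : ∀ t ∈ Set.Ico (0 : ℝ) 1,
      ‖⟪gradient f (x + t • u) - gradient f x, u⟫‖ ≤ L * ‖u‖ ^ 2 * t := by
    rintro t ⟨ht, -⟩
    calc ‖⟪gradient f (x + t • u) - gradient f x, u⟫‖
        ≤ ‖gradient f (x + t • u) - gradient f x‖ * ‖u‖ := norm_inner_le_norm _ _
      _ ≤ L * ‖t • u‖ * ‖u‖ := by
        gcongr; simpa using hlip (x + t • u) x
      _ = L * ‖u‖ ^ 2 * t := by rw [norm_smul, Real.norm_of_nonneg ht]; ring
  have := image_norm_le_of_norm_deriv_right_le_deriv_boundary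
    (fun t _ => (hg t).continuousAt.continuousWithinAt) (fun t _ => (hg t).hasDerivWithinAt)
    (by simp [g]) hB hbound (Set.right_mem_Icc.2 zero_le_one)
  simpa [g] using this

theorem abs_div_sub_inner_gradient_le (hf : Differentiable ℝ f)
    (hlip : ∀ x y, ‖gradient f x - gradient f y‖ ≤ L * ‖x - y‖) {ε : ℝ} (hε : 0 < ε) (x u : E) :
    |(f (x + ε • u) - f x) / ε - ⟪gradient f x, u⟫| ≤ ε * L / 2 * ‖u‖ ^ 2 := by
  have key := abs_sub_sub_inner_gradient_le hf hlip x (ε • u)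
  rw [real_inner_smul_right, norm_smul, Real.norm_of_nonneg hε.le] at key
  have hdiv : (f (x + ε • u) - f x) / ε - ⟪gradient f x, u⟫
      = (f (x + ε • u) - f x - ε * ⟪gradient f x, u⟫) / ε := by
    field_simp
  rw [hdiv, abs_div, abs_of_pos hε, div_le_iff₀ hε]
  exact key.trans_eq (by ring)

/-- The paper's `h_{v,ε}(θ)`, with control variate `fhat`. -/
noncomputable def fdCVForwardGradient (f fhat : E → ℝ) (ε : ℝ) (θ v : E) : E :=
  ((f (θ + ε • v) - f θ) / ε) • v - ⟪gradient fhat θ, v⟫ • v + gradient fhat θ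

theorem fdCVForwardGradient_sub_gradient (f fhat : E → ℝ) (ε : ℝ) (θ v : E) :
    fdCVForwardGradient f fhat ε θ v - gradient f θ
      = ((f (θ + ε • v) - f θ) / ε - ⟪gradient f θ, v⟫) • v
        + (⟪gradient f θ - gradient fhat θ, v⟫ • v - (gradient f θ - gradient fhat θ)) := by
  simp only [fdCVForwardGradient, inner_sub_left, sub_smul]
  abel

theorem norm_fdCVForwardGradient_sub_gradient_sq_le (hf : Differentiable ℝ f)
    (hlip : ∀ x y, ‖gradient f x - gradient f y‖ ≤ L * ‖x - y‖) {ε : ℝ} (hε : 0 < ε)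
    (fhat : E → ℝ) (θ : E) {v : E} (hv : 1 ≤ ‖v‖) :
    ‖fdCVForwardGradient f fhat ε θ v - gradient f θ‖ ^ 2
      ≤ (‖v‖ ^ 2 - 2) * ⟪gradient f θ - gradient fhat θ, v⟫ ^ 2
        + (‖v‖ ^ 2 * (ε * L / 2 * ‖v‖ ^ 2) ^ 2
          + 2 * (‖v‖ ^ 2 - 1) * ((ε * L / 2 * ‖v‖ ^ 2) * (‖gradient f θ - gradient fhat θ‖ * ‖v‖))
          + ‖gradient f θ - gradient fhat θ‖ ^ 2) := by
  set D := gradient f θ - gradient fhat θ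
  set a := (f (θ + ε • v) - f θ) / ε - ⟪gradient f θ, v⟫
  have ha : |a| ≤ ε * L / 2 * ‖v‖ ^ 2 := abs_div_sub_inner_gradient_le hf hlip hε θ v
  have hq : |⟪D, v⟫| ≤ ‖D‖ * ‖v‖ := abs_real_inner_le_norm D v
  have ha2 : a ^ 2 ≤ (ε * L / 2 * ‖v‖ ^ 2) ^ 2 := sq_le_sq' (abs_le.1 ha).1 (abs_le.1 ha).2
  have haq : a * ⟪D, v⟫ ≤ (ε * L / 2 * ‖v‖ ^ 2) * (‖D‖ * ‖v‖) :=
    (le_abs_self _).trans <| (abs_mul a _).trans_le <|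
      mul_le_mul ha hq (abs_nonneg _) ((abs_nonneg a).trans ha)
  have hv2 : 1 ≤ ‖v‖ ^ 2 := one_le_pow₀ hv
  rw [fdCVForwardGradient_sub_gradient, norm_smul_add_inner_smul_sub_sq]
  linarith [mul_le_mul_of_nonneg_left ha2 (sq_nonneg ‖v‖),
    mul_le_mul_of_nonneg_left haq (by linarith : (0 : ℝ) ≤ 2 * (‖v‖ ^ 2 - 1))]

end InnerProductSpace

section Rademacher

variable {Ω ι : Type*} [MeasurableSpace Ω] {μ : Measure Ω}

theorem integrable_mul_of_ae_eq_one_or_eq_neg_one [IsFiniteMeasure μ] {X : ι → Ω → ℝ}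
    (hX : ∀ i, Measurable (X i)) (hsign : ∀ i, ∀ᵐ ω ∂μ, X i ω = 1 ∨ X i ω = -1) (i j : ι) :
    Integrable (fun ω => X i ω * X j ω) μ := by
  refine Integrable.of_bound ((hX i).mul (hX j)).aestronglyMeasurable 1 ?_
  filter_upwards [hsign i, hsign j] with ω hi hj
  rcases hi with hi | hi <;> rcases hj with hj | hj <;> simp [hi, hj]

variable [IsProbabilityMeasure μ]

theorem ae_eq_one_or_eq_neg_one_of_measure_eq_half {X : Ω → ℝ} (hX : Measurable X)
    (h1 : μ {ω | X ω = 1} = 1 / 2) (h2 : μ {ω | X ω = -1} = 1 / 2) :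
    ∀ᵐ ω ∂μ, X ω = 1 ∨ X ω = -1 := by
  have hdisj : Disjoint {ω | X ω = 1} {ω | X ω = -1} :=
    Set.disjoint_left.2 fun ω (h1 : X ω = 1) (h2 : X ω = -1) => by norm_num [h1] at h2
  have hmeas : MeasurableSet {ω | X ω = 1 ∨ X ω = -1} :=
    (hX (measurableSet_singleton 1)).union (hX (measurableSet_singleton (-1)))
  rw [ae_iff_measure_eq hmeas.nullMeasurableSet, Set.ofPred_or,
    measure_union hdisj (hX (measurableSet_singleton (-1))), h1, h2, ENNReal.add_halves,
    measure_univ]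

theorem integral_eq_zero_of_measure_eq_half {X : Ω → ℝ} (hX : Measurable X)
    (h1 : μ {ω | X ω = 1} = 1 / 2) (h2 : μ {ω | X ω = -1} = 1 / 2) :
    ∫ ω, X ω ∂μ = 0 := by
  have hA : MeasurableSet {ω | X ω = 1} := hX (measurableSet_singleton 1)
  have hX_eq : X =ᵐ[μ] fun ω => 2 * {ω | X ω = 1}.indicator 1 ω - 1 := by
    filter_upwards [ae_eq_one_or_eq_neg_one_of_measure_eq_half hX h1 h2] with ω hω
    rcases hω with h | h <;> norm_num [Set.indicator, h]
  rw [integral_congr_ae hX_eq, integral_sub ((integrable_const _).indicator hA |>.const_mul 2)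
    (integrable_const 1), integral_const_mul, integral_indicator_one hA, measureReal_def, h1]
  simp

theorem integral_mul_eq_ite_of_rademacher [DecidableEq ι] {X : ι → Ω → ℝ}
    (hX : ∀ i, Measurable (X i)) (hindep : iIndepFun X μ)
    (hrad : ∀ i, μ {ω | X i ω = 1} = 1 / 2 ∧ μ {ω | X i ω = -1} = 1 / 2) (i j : ι) :
    ∫ ω, X i ω * X j ω ∂μ = if i = j then 1 else 0 := by
  split_ifs with hij
  · subst hij
    have hsq : (fun ω => X i ω * X i ω) =ᵐ[μ] fun _ => 1 := by
      filter_upwards [ae_eq_one_or_eq_neg_one_of_measure_eq_half (hX i) (hrad i).1 (hrad i).2]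
        with ω hω
      rcases hω with h | h <;> simp [h]
    simp [integral_congr_ae hsq]
  · rw [(hindep.indepFun hij).integral_fun_mul_eq_mul_integral (hX i).aestronglyMeasurable
      (hX j).aestronglyMeasurable, integral_eq_zero_of_measure_eq_half (hX i) (hrad i).1 (hrad i).2,
      zero_mul]

end Rademacher

section Orthonormal

variable {Ω ι : Type*} [MeasurableSpace Ω] {μ : Measure Ω} [Fintype ι] {X : ι → Ω → ℝ}

theorem sq_sum_mul_eq (c x : ι → ℝ) :
    (∑ i, c i * x i) ^ 2 = ∑ i, ∑ j, c i * c j * (x i * x j) := by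
  rw [sq, Finset.sum_mul_sum]
  exact Finset.sum_congr rfl fun i _ => Finset.sum_congr rfl fun j _ => by ring

theorem integrable_sq_sum_mul (hint : ∀ i j, Integrable (fun ω => X i ω * X j ω) μ) (c : ι → ℝ) :
    Integrable (fun ω => (∑ i, c i * X i ω) ^ 2) μ := by
  simp_rw [sq_sum_mul_eq]
  exact integrable_finsetSum _ fun i _ => integrable_finsetSum _ fun j _ => (hint i j).const_mul _

theorem integral_sq_sum_mul [DecidableEq ι] (hint : ∀ i j, Integrable (fun ω => X i ω * X j ω) μ)
    (horth : ∀ i j, ∫ ω, X i ω * X j ω ∂μ = if i = j then 1 else 0) (c : ι → ℝ) :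
    ∫ ω, (∑ i, c i * X i ω) ^ 2 ∂μ = ∑ i, c i ^ 2 := by
  simp_rw [sq_sum_mul_eq]
  rw [integral_finsetSum _ fun i _ => integrable_finsetSum _ fun j _ => (hint i j).const_mul _]
  simp_rw [integral_finsetSum _ fun j _ => (hint _ j).const_mul _, integral_const_mul, horth]
  simp [sq]

end Orthonormal

section Euclidean

variable {ι : Type*} [Fintype ι]

theorem EuclideanSpace.norm_sq_eq_card_of_forall_eq_one_or_eq_neg_one {x : EuclideanSpace ℝ ι}
    (hx : ∀ i, x i = 1 ∨ x i = -1) : ‖x‖ ^ 2 = Fintype.card ι := by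
  have hsq : ∀ i, x i ^ 2 = 1 := fun i => by rcases hx i with h | h <;> simp [h]
  simp [EuclideanSpace.norm_sq_eq, hsq]

theorem EuclideanSpace.inner_eq_sum_mul (w x : EuclideanSpace ℝ ι) : ⟪w, x⟫ = ∑ i, w i * x i := by
  simp [PiLp.inner_apply, mul_comm]

variable {Ω : Type*} [MeasurableSpace Ω] {μ : Measure Ω} {v : Ω → EuclideanSpace ℝ ι}

theorem integrable_inner_sq_of_ae_eq_one_or_eq_neg_one [IsFiniteMeasure μ] (hv : Measurable v)
    (hsign : ∀ i, ∀ᵐ ω ∂μ, v ω i = 1 ∨ v ω i = -1) (w : EuclideanSpace ℝ ι) :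
    Integrable (fun ω => ⟪w, v ω⟫ ^ 2) μ := by
  simp_rw [EuclideanSpace.inner_eq_sum_mul]
  exact integrable_sq_sum_mul
    (integrable_mul_of_ae_eq_one_or_eq_neg_one (fun i => by fun_prop) hsign) w

theorem integral_inner_sq_of_rademacher [IsProbabilityMeasure μ] [DecidableEq ι]
    (hv : Measurable v) (hindep : iIndepFun (fun i ω => v ω i) μ)
    (hrad : ∀ i, μ {ω | v ω i = 1} = 1 / 2 ∧ μ {ω | v ω i = -1} = 1 / 2)
    (w : EuclideanSpace ℝ ι) :
    ∫ ω, ⟪w, v ω⟫ ^ 2 ∂μ = ‖w‖ ^ 2 := by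
  have hcoord : ∀ i, Measurable fun ω => v ω i := fun i => by fun_prop
  simp_rw [EuclideanSpace.inner_eq_sum_mul]
  rw [integral_sq_sum_mul (integrable_mul_of_ae_eq_one_or_eq_neg_one hcoord fun i =>
      ae_eq_one_or_eq_neg_one_of_measure_eq_half (hcoord i) (hrad i).1 (hrad i).2)
    (integral_mul_eq_ite_of_rademacher hcoord hindep hrad), EuclideanSpace.norm_sq_eq]
  simp

end Euclidean

theorem fd_cv_forward_gradient_mse_bound_general
    {Ω : Type*} [MeasurableSpace Ω] {μ : Measure Ω} [IsProbabilityMeasure μ]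
    {d : ℕ} (f fhat : EuclideanSpace ℝ (Fin d) → ℝ) (L : ℝ)
    (hf : Differentiable ℝ f)
    (hlip : ∀ x y, ‖gradient f x - gradient f y‖ ≤ L * ‖x - y‖)
    (ε : ℝ) (hε : 0 < ε) (θ : EuclideanSpace ℝ (Fin d))
    (v : Ω → EuclideanSpace ℝ (Fin d)) (hmeas : Measurable v)
    (hindep : iIndepFun (fun i ω => v ω i) μ)
    (hrad : ∀ i, μ {ω | v ω i = 1} = 1/2 ∧ μ {ω | v ω i = -1} = 1/2) :
    ∫ ω, ‖(((f (θ + ε • v ω) - f θ) / ε) • v ω - ⟪gradient fhat θ, v ω⟫ • v ω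
          + gradient fhat θ) - gradient f θ‖ ^ 2 ∂μ
      ≤ ε ^ 2 * L ^ 2 * (d : ℝ) ^ 3 / 4
        + 2 * ((d : ℝ) - 1) * (ε * L * (d : ℝ) ^ ((3 : ℝ) / 2) / 2)
            * ‖gradient f θ - gradient fhat θ‖
        + ((d : ℝ) - 1) * ‖gradient f θ - gradient fhat θ‖ ^ 2 := by
  obtain rfl | hd := Nat.eq_zero_or_pos d
  · simp [Subsingleton.elim _ (0 : EuclideanSpace ℝ (Fin 0))]
  set D := gradient f θ - gradient fhat θ
  set C := (d : ℝ) * (ε * L / 2 * d) ^ 2 + 2 * ((d : ℝ) - 1) * ((ε * L / 2 * d) * (‖D‖ * √d))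
    + ‖D‖ ^ 2
  have hsign : ∀ᵐ ω ∂μ, ∀ i, v ω i = 1 ∨ v ω i = -1 := ae_all_iff.2 fun i =>
    ae_eq_one_or_eq_neg_one_of_measure_eq_half (by fun_prop) (hrad i).1 (hrad i).2
  have hnorm : ∀ᵐ ω ∂μ, ‖v ω‖ = √d := hsign.mono fun ω h => by
    rw [← Real.sqrt_sq (norm_nonneg _),
      EuclideanSpace.norm_sq_eq_card_of_forall_eq_one_or_eq_neg_one h, Fintype.card_fin]
  have hpoint : ∀ᵐ ω ∂μ, ‖fdCVForwardGradient f fhat ε θ (v ω) - gradient f θ‖ ^ 2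
      ≤ ((d : ℝ) - 2) * ⟪D, v ω⟫ ^ 2 + C := hnorm.mono fun ω h => by
    have hd1 : (1 : ℝ) ≤ √d := Real.one_le_sqrt.2 (by exact_mod_cast hd)
    have := norm_fdCVForwardGradient_sub_gradient_sq_le hf hlip hε fhat θ (h ▸ hd1)
    rwa [h, Real.sq_sqrt (Nat.cast_nonneg d)] at this
  have hint : Integrable (fun ω => ⟪D, v ω⟫ ^ 2) μ :=
    integrable_inner_sq_of_ae_eq_one_or_eq_neg_one hmeas (fun i => hsign.mono fun ω h => h i) D
  calc ∫ ω, ‖fdCVForwardGradient f fhat ε θ (v ω) - gradient f θ‖ ^ 2 ∂μ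
      ≤ ∫ ω, ((d : ℝ) - 2) * ⟪D, v ω⟫ ^ 2 + C ∂μ :=
        integral_mono_of_nonneg (ae_of_all _ fun _ => sq_nonneg _)
          ((hint.const_mul _).add (integrable_const C)) hpoint
    _ = ((d : ℝ) - 2) * ‖D‖ ^ 2 + C := by
        rw [integral_add (hint.const_mul _) (integrable_const C), integral_const_mul,
          integral_inner_sq_of_rademacher hmeas hindep hrad]
        simp
    _ = _ := by
        rw [show (3 : ℝ) / 2 = 1 + 1 / 2 by norm_num, Real.rpow_add (by exact_mod_cast hd),
          Real.rpow_one, ← Real.sqrt_eq_rpow]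
        ring

/-- **Mean squared error bound for the finite-difference control variate forward
gradient.**  If `f` is `L`-smooth, `f̂` differentiable, `ε > 0`, and `v` has independent
Rademacher components, then for
`h_{v,ε}(θ) = ((f(θ+εv) − f(θ))/ε) v − (∇f̂(θ)·v)v + ∇f̂(θ)` we have
`E[‖h_{v,ε}(θ) − ∇f(θ)‖²] ≤ ε²L²d³/4 + 2(d−1)(εLd^{3/2}/2)‖∇f(θ) − ∇f̂(θ)‖
+ (d−1)‖∇f(θ) − ∇f̂(θ)‖²`. -/
theorem fd_cv_forward_gradient_mse_bound
    {Ω : Type*} [MeasurableSpace Ω] {μ : Measure Ω} [IsProbabilityMeasure μ]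
    {d : ℕ} (f fhat : EuclideanSpace ℝ (Fin d) → ℝ) (L : ℝ) (hL : 0 ≤ L)
    (hf : Differentiable ℝ f)
    (hlip : ∀ x y, ‖gradient f x - gradient f y‖ ≤ L * ‖x - y‖)
    (hfhat : Differentiable ℝ fhat)
    (ε : ℝ) (hε : 0 < ε) (θ : EuclideanSpace ℝ (Fin d))
    (v : Ω → EuclideanSpace ℝ (Fin d)) (hmeas : Measurable v)
    (hindep : iIndepFun (fun i ω => v ω i) μ)
    (hrad : ∀ i, μ {ω | v ω i = 1} = 1/2 ∧ μ {ω | v ω i = -1} = 1/2) :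
    ∫ ω, ‖(((f (θ + ε • v ω) - f θ) / ε) • v ω - ⟪gradient fhat θ, v ω⟫ • v ω
          + gradient fhat θ) - gradient f θ‖ ^ 2 ∂μ
      ≤ ε ^ 2 * L ^ 2 * (d : ℝ) ^ 3 / 4
        + 2 * ((d : ℝ) - 1) * (ε * L * (d : ℝ) ^ ((3 : ℝ) / 2) / 2)
            * ‖gradient f θ - gradient fhat θ‖
        + ((d : ℝ) - 1) * ‖gradient f θ - gradient fhat θ‖ ^ 2 :=
  fd_cv_forward_gradient_mse_bound_general f fhat L hf hlip ε hε θ v hmeas hindep hrad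
end
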